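/- arXiv:1601.00769 — 4 statements merged into one kernel-verified Lean document; each statement's English description precedes it below -/
import Mathlib

section
/- Let X be a set and let C be a set function on the subsets of X with values in [0,∞] which is monotone (A ⊆ B implies C(A) ≤ C(B)) and finitely subadditive (C(A ∪ B) ≤ C(A) + C(B) for all A, B ⊆ X). Then for every real p ≥ 1 and all functions f, g : X → ℝ, the quasi-triangle inequality ‖f + g‖_{L^p(X,C)} ≤ 2 (‖f‖_{L^p(X,C)} + ‖g‖_{L^p(X,C)}) holds. -/
open MeasureTheory Set

/-- The Choquet integral of `f : X → ℝ≥0∞` with respect to a set function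
`C : Set X → ℝ≥0∞`: `∫_X f dC = ∫₀^∞ C({x | f x ≥ t}) dt`. -/
noncomputable def choquetIntegral {X : Type*} (C : Set X → ENNReal) (f : X → ENNReal) : ENNReal :=
  ∫⁻ t in Set.Ioi (0 : ℝ), C {x | ENNReal.ofReal t ≤ f x}

/-- The Choquet `L^p` seminorm of a real-valued function `f : X → ℝ`:
`‖f‖_{L^p(X,C)} = (∫_X |f|^p dC)^(1/p)`. -/
noncomputable def choquetLpNorm {X : Type*} (C : Set X → ENNReal) (f : X → ℝ) (p : ℝ) :
    ENNReal :=
  (choquetIntegral C (fun x => ENNReal.ofReal |f x| ^ p)) ^ (1 / p)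

/-!
The Choquet integral is not subadditive for a merely subadditive `C`, but it is subadditive on
maxima, since the superlevel sets of `max h k` are unions of those of `h` and `k`. Pointwise,
`|f + g|^p ≤ 2^p max(|f|^p, |g|^p)`, and rescaling `t ↦ 2^p t` in the defining integral pulls
the factor `2^p` out, so `∫ |f + g|^p dC ≤ 2^p (∫ |f|^p dC + ∫ |g|^p dC)`. Taking `p`-th roots,
with `(a + b)^(1/p) ≤ a^(1/p) + b^(1/p)`, gives the constant `2`.
-/

open scoped ENNReal

lemma lintegral_Ioi_comp_div (F : ℝ → ℝ≥0∞) {c : ℝ} (hc : 0 < c) :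
    ∫⁻ t in Ioi 0, F (t / c) = ENNReal.ofReal c * ∫⁻ t in Ioi 0, F t := by
  have hc' : c⁻¹ ≠ 0 := inv_ne_zero hc.ne'
  have hind : (Ioi 0).indicator (fun t => F (t / c)) =
      fun t => (Ioi 0).indicator F (MeasurableEquiv.mulLeft₀ c⁻¹ hc' t) := by
    ext t
    simp only [indicator, mem_Ioi, MeasurableEquiv.coe_mulLeft₀,
      div_eq_inv_mul, mul_pos_iff_of_pos_left (inv_pos.2 hc)]
  rw [← lintegral_indicator measurableSet_Ioi, ← lintegral_indicator measurableSet_Ioi, hind,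
    ← lintegral_map_equiv, MeasurableEquiv.coe_mulLeft₀, Real.map_volume_mul_left hc',
    lintegral_smul_measure, inv_inv, abs_of_pos hc, smul_eq_mul]

lemma ENNReal.add_rpow_le_two_rpow_mul_max (a b : ℝ≥0∞) {p : ℝ} (hp : 0 ≤ p) :
    (a + b) ^ p ≤ 2 ^ p * max (a ^ p) (b ^ p) :=
  calc (a + b) ^ p ≤ (2 * max a b) ^ p := by
        gcongr
        rw [two_mul]
        exact add_le_add (le_max_left a b) (le_max_right a b)
    _ = 2 ^ p * max (a ^ p) (b ^ p) := by
        rw [ENNReal.mul_rpow_of_nonneg _ _ hp, (ENNReal.monotone_rpow_of_nonneg hp).map_max]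

lemma ENNReal.ofReal_abs_add_rpow_le (a b : ℝ) {p : ℝ} (hp : 0 ≤ p) :
    ENNReal.ofReal |a + b| ^ p ≤
      2 ^ p * max (ENNReal.ofReal |a| ^ p) (ENNReal.ofReal |b| ^ p) :=
  calc ENNReal.ofReal |a + b| ^ p ≤ (ENNReal.ofReal |a| + ENNReal.ofReal |b|) ^ p := by
        gcongr
        rw [← ENNReal.ofReal_add (abs_nonneg a) (abs_nonneg b)]
        exact ENNReal.ofReal_le_ofReal (abs_add_le a b)
    _ ≤ _ := ENNReal.add_rpow_le_two_rpow_mul_max _ _ hp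

section Choquet

variable {X : Type*} {C : Set X → ℝ≥0∞}

lemma measurable_setFunction_superlevelSet (hC : Monotone C) (h : X → ℝ≥0∞) :
    Measurable fun t : ℝ => C {x | ENNReal.ofReal t ≤ h x} :=
  Antitone.measurable fun _ _ hst => hC fun _ hx => (ENNReal.ofReal_le_ofReal hst).trans hx

lemma choquetIntegral_mono (hC : Monotone C) {h k : X → ℝ≥0∞} (hhk : h ≤ k) :
    choquetIntegral C h ≤ choquetIntegral C k :=
  lintegral_mono fun _ => hC fun x hx => le_trans hx (hhk x)

lemma choquetIntegral_const_mul (C : Set X → ℝ≥0∞) (h : X → ℝ≥0∞) {c : ℝ≥0∞} (hc₀ : c ≠ 0)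
    (hc : c ≠ ∞) : choquetIntegral C (fun x => c * h x) = c * choquetIntegral C h := by
  have hlevel : ∀ t : ℝ, {x | ENNReal.ofReal t ≤ c * h x} =
      {x | ENNReal.ofReal (t / c.toReal) ≤ h x} := by
    intro t
    ext x
    rw [mem_ofPred_eq, mem_ofPred_eq, ENNReal.ofReal_div_of_pos (ENNReal.toReal_pos hc₀ hc),
      ENNReal.ofReal_toReal hc, ENNReal.div_le_iff' hc₀ hc]
  simp only [choquetIntegral, hlevel]
  rw [lintegral_Ioi_comp_div (fun t => C {x | ENNReal.ofReal t ≤ h x})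
    (ENNReal.toReal_pos hc₀ hc), ENNReal.ofReal_toReal hc]

lemma choquetIntegral_max_le (hC : Monotone C) (hC_subadd : ∀ A B, C (A ∪ B) ≤ C A + C B)
    (h k : X → ℝ≥0∞) :
    choquetIntegral C (fun x => max (h x) (k x)) ≤ choquetIntegral C h + choquetIntegral C k := by
  have hlevel : ∀ t : ℝ, {x | ENNReal.ofReal t ≤ max (h x) (k x)} =
      {x | ENNReal.ofReal t ≤ h x} ∪ {x | ENNReal.ofReal t ≤ k x} := fun t => by
    ext x
    simp only [le_max_iff, mem_ofPred_eq, mem_union]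
  calc choquetIntegral C (fun x => max (h x) (k x))
      ≤ ∫⁻ t in Ioi 0, (C {x | ENNReal.ofReal t ≤ h x} + C {x | ENNReal.ofReal t ≤ k x}) :=
        lintegral_mono fun t => (hlevel t).symm ▸ hC_subadd _ _
    _ = choquetIntegral C h + choquetIntegral C k :=
        lintegral_add_left (measurable_setFunction_superlevelSet hC h) _

end Choquet

/-- Quasi-triangle inequality for the Choquet `L^p` seminorm: if `C` is monotone and
finitely subadditive, then `‖f + g‖_{L^p(X,C)} ≤ 2 (‖f‖_{L^p(X,C)} + ‖g‖_{L^p(X,C)})`. -/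
theorem choquetLpNorm_add_le {X : Type*} (C : Set X → ENNReal)
    (hC_mono : ∀ A B : Set X, A ⊆ B → C A ≤ C B)
    (hC_subadd : ∀ A B : Set X, C (A ∪ B) ≤ C A + C B)
    (p : ℝ) (hp : 1 ≤ p) (f g : X → ℝ) :
    choquetLpNorm C (fun x => f x + g x) p ≤
      2 * (choquetLpNorm C f p + choquetLpNorm C g p) := by
  have hp₀ : 0 < p := one_pos.trans_le hp
  have hC : Monotone C := fun A B => hC_mono A B
  set A := choquetIntegral C (fun x => ENNReal.ofReal |f x| ^ p)
  set B := choquetIntegral C (fun x => ENNReal.ofReal |g x| ^ p)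
  have hintegral :
      choquetIntegral C (fun x => ENNReal.ofReal |f x + g x| ^ p) ≤ 2 ^ p * (A + B) :=
    calc _ ≤ choquetIntegral C
          (fun x => 2 ^ p * max (ENNReal.ofReal |f x| ^ p) (ENNReal.ofReal |g x| ^ p)) :=
        choquetIntegral_mono hC fun x => ENNReal.ofReal_abs_add_rpow_le _ _ hp₀.le
      _ = 2 ^ p * choquetIntegral C
          (fun x => max (ENNReal.ofReal |f x| ^ p) (ENNReal.ofReal |g x| ^ p)) :=
        choquetIntegral_const_mul _ _ (by positivity) (by simp)
      _ ≤ 2 ^ p * (A + B) := by gcongr; exact choquetIntegral_max_le hC hC_subadd _ _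
  calc choquetLpNorm C (fun x => f x + g x) p ≤ (2 ^ p * (A + B)) ^ (1 / p) :=
        ENNReal.rpow_le_rpow hintegral (by positivity)
    _ = 2 * (A + B) ^ (1 / p) := by
        rw [ENNReal.mul_rpow_of_nonneg _ _ (by positivity), ← ENNReal.rpow_mul,
          mul_one_div_cancel hp₀.ne', ENNReal.rpow_one]
    _ ≤ 2 * (A ^ (1 / p) + B ^ (1 / p)) := by
        gcongr
        exact ENNReal.rpow_add_le_add_rpow A B (by positivity) ((div_le_one hp₀).2 hp)
end

section
/- Let X be a set and let C be a set function on the subsets of X with values in [0,∞] which is monotone and continuous from below, i.e. for every nondecreasing sequence (A_n) of subsets of X one has C(⋃_n A_n) = sup_n C(A_n). If (f_j) is a nondecreasing sequence of functions f_j : X → [0,∞] and f := sup_j f_j, then ∫_X f dC = lim_{j→∞} ∫_X f_j dC = sup_j ∫_X f_j dC. -/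
open MeasureTheory Set Filter Topology

/-! The level sets `{f > t}` of `f = ⨆ j, f j` are the increasing unions of those of the `f j`,
so continuity from below of `C` and the Lebesgue monotone convergence theorem give the result for
the integrand `t ↦ C {f > t}`. Replacing `{f ≥ t}` by `{f > t}` does not change the integral:
`C {f > t} ≤ C {f ≥ t} ≤ C {f > s}` for `0 < s < t`, so the two antitone integrands agree at every
continuity point of the second one, that is, off a countable set. -/

theorem Antitone.ae_eq_restrict_Ioi_of_le_of_le_of_lt {μ : Measure ℝ} [NullSingletonClass μ]
    {a : ℝ} {φ ψ : ℝ → ENNReal} (hψ : Antitone ψ) (hψφ : ψ ≤ φ)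
    (hφψ : ∀ s t, a < s → s < t → φ t ≤ ψ s) : φ =ᵐ[μ.restrict (Ioi a)] ψ := by
  have hcont : ∀ᵐ t ∂μ, ContinuousAt ψ t := by
    filter_upwards [hψ.countable_not_continuousAt.ae_notMem μ] with t ht
    simpa using ht
  filter_upwards [ae_restrict_of_ae hcont, ae_restrict_mem measurableSet_Ioi] with t ht hat
  refine le_antisymm ?_ (hψφ t)
  refine _root_.ge_of_tendsto (ht.tendsto.mono_left (nhdsWithin_le_nhds (s := Iio t))) ?_
  filter_upwards [Ioo_mem_nhdsLT hat] with s hs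
  exact hφψ s t hs.1 hs.2

section Choquet

variable {X : Type*} {C : Set X → ENNReal}

theorem antitone_setOf_ofReal_lt (hC : Monotone C) (f : X → ENNReal) :
    Antitone fun t : ℝ => C {x | ENNReal.ofReal t < f x} :=
  fun _ _ hst => hC fun _ hx => (ENNReal.ofReal_le_ofReal hst).trans_lt hx

theorem choquetIntegral_eq_lintegral_lt (hC : Monotone C) (f : X → ENNReal) :
    choquetIntegral C f = ∫⁻ t in Ioi (0 : ℝ), C {x | ENNReal.ofReal t < f x} := by
  refine lintegral_congr_ae
    (Antitone.ae_eq_restrict_Ioi_of_le_of_le_of_lt (antitone_setOf_ofReal_lt hC f) ?_ ?_)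
  · exact fun t => hC fun _ hx => le_of_lt (mem_ofPred.1 hx)
  · intro s t hs hst
    exact hC fun _ hx => ((ENNReal.ofReal_lt_ofReal_iff (hs.trans hst)).2 hst).trans_le hx

theorem choquetIntegral_mono_s5 (hC : Monotone C) {f g : X → ENNReal} (hfg : f ≤ g) :
    choquetIntegral C f ≤ choquetIntegral C g :=
  lintegral_mono fun _ => hC fun x hx => hx.trans (hfg x)

theorem choquetIntegral_iSup (hC : Monotone C)
    (hC_below : ∀ A : ℕ → Set X, Monotone A → C (⋃ n, A n) = ⨆ n, C (A n))
    {f : ℕ → X → ENNReal} (hf : Monotone f) :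
    choquetIntegral C (fun x => ⨆ j, f j x) = ⨆ j, choquetIntegral C (f j) := by
  have hlevel : ∀ t : ℝ, C {x | ENNReal.ofReal t < ⨆ j, f j x}
      = ⨆ j, C {x | ENNReal.ofReal t < f j x} := by
    intro t
    have hunion : {x | ENNReal.ofReal t < ⨆ j, f j x} = ⋃ j, {x | ENNReal.ofReal t < f j x} := by
      ext x
      simp only [mem_ofPred_eq, mem_iUnion, lt_iSup_iff]
    rw [hunion]
    exact hC_below _ fun i j hij x hx => hx.trans_le (hf hij x)
  simp only [choquetIntegral_eq_lintegral_lt hC, hlevel]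
  refine lintegral_iSup (fun j => (antitone_setOf_ofReal_lt hC (f j)).measurable) ?_
  exact fun i j hij t => hC fun x hx => hx.trans_le (hf hij x)

end Choquet

/-- Monotone convergence for the Choquet integral: if `C` is monotone and continuous
from below, and `(f j)` is a nondecreasing sequence of nonnegative functions with
pointwise supremum `f`, then `∫_X f dC = lim_j ∫_X f_j dC = sup_j ∫_X f_j dC`. -/
theorem choquet_integral_monotone_convergence {X : Type*} (C : Set X → ENNReal)
    (hC_mono : ∀ A B : Set X, A ⊆ B → C A ≤ C B)
    (hC_below : ∀ A : ℕ → Set X, (∀ n, A n ⊆ A (n + 1)) →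
      C (⋃ n, A n) = ⨆ n, C (A n))
    (f : ℕ → X → ENNReal) (hf_mono : ∀ j x, f j x ≤ f (j + 1) x) :
    choquetIntegral C (fun x => ⨆ j, f j x) = ⨆ j, choquetIntegral C (f j) ∧
    Tendsto (fun j => choquetIntegral C (f j)) atTop
      (𝓝 (choquetIntegral C (fun x => ⨆ j, f j x))) := by
  have hC : Monotone C := fun A B => hC_mono A B
  have hf : Monotone f := monotone_nat_of_le_succ fun j x => hf_mono j x
  have hsup := choquetIntegral_iSup hC
    (fun A hA => hC_below A fun n => hA n.le_succ) hf
  refine ⟨hsup, ?_⟩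
  rw [hsup]
  exact tendsto_atTop_iSup fun i j hij => choquetIntegral_mono_s5 hC (hf hij)
end

section
/- Let X be a compact Hausdorff topological space and let C be a set function on the subsets of X with values in [0,∞] which is monotone and continuous from above along decreasing sequences of compact sets, i.e. for every nonincreasing sequence (K_n) of compact subsets of X one has C(⋂_n K_n) = inf_n C(K_n). Let (f_j) be a nonincreasing sequence of upper semi-continuous functions f_j : X → [0,∞] and let f := inf_j f_j. If ∫_X f_1 dC < ∞, then ∫_X f dC = lim_{j→∞} ∫_X f_j dC = inf_j ∫_X f_j dC. -/
open MeasureTheory Set Filter Topology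

/-- Decreasing convergence for the Choquet integral on a compact Hausdorff space: if `C` is
monotone and continuous from above along decreasing sequences of compact sets, `(f j)` is a
nonincreasing sequence of upper semi-continuous nonnegative functions (`{f j ≥ t}` is closed
for every `t`) with pointwise infimum `f`, and `∫_X f_1 dC < ∞`, then
`∫_X f dC = lim_j ∫_X f_j dC = inf_j ∫_X f_j dC`. -/
theorem choquet_integral_decreasing_convergence {X : Type*} [TopologicalSpace X]
    [CompactSpace X] [T2Space X] (C : Set X → ENNReal)
    (hC_mono : ∀ A B : Set X, A ⊆ B → C A ≤ C B)
    (hC_above : ∀ K : ℕ → Set X, (∀ n, IsCompact (K n)) → (∀ n, K (n + 1) ⊆ K n) →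
      C (⋂ n, K n) = ⨅ n, C (K n))
    (f : ℕ → X → ENNReal)
    (hf_usc : ∀ j, ∀ t : ENNReal, IsClosed {x | t ≤ f j x})
    (hf_anti : ∀ j x, f (j + 1) x ≤ f j x)
    (hf0 : choquetIntegral C (f 0) < ⊤) :
    choquetIntegral C (fun x => ⨅ j, f j x) = ⨅ j, choquetIntegral C (f j) ∧
    Tendsto (fun j => choquetIntegral C (f j)) atTop
      (𝓝 (choquetIntegral C (fun x => ⨅ j, f j x))) := by
  set g : ℕ → ℝ → ENNReal := fun j t => C {x | ENNReal.ofReal t ≤ f j x} with hg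
  have hmeas : ∀ j, Measurable (g j) := by
    intro j
    have : Antitone (g j) := fun t1 t2 h =>
      hC_mono _ _ (fun x hx => le_trans (ENNReal.ofReal_le_ofReal h) hx)
    exact this.measurable
  have hanti : Antitone g := antitone_nat_of_succ_le fun j t =>
    hC_mono _ _ (fun x hx => le_trans hx (hf_anti j x))
  have hkey : ∀ t : ℝ, C {x | ENNReal.ofReal t ≤ ⨅ j, f j x} = ⨅ j, g j t := by
    intro t
    have hsets : {x | ENNReal.ofReal t ≤ ⨅ j, f j x} = ⋂ j, {x | ENNReal.ofReal t ≤ f j x} := by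
      ext x; simp [le_iInf_iff]
    rw [hsets]
    exact hC_above _ (fun j => (hf_usc j _).isCompact)
      (fun j x hx => le_trans hx (hf_anti j x))
  have hmain : choquetIntegral C (fun x => ⨅ j, f j x) = ⨅ j, choquetIntegral C (f j) := by
    unfold choquetIntegral
    simp_rw [hkey]
    exact lintegral_iInf hmeas hanti hf0.ne
  refine ⟨hmain, ?_⟩
  rw [hmain]
  exact tendsto_atTop_iInf fun a b h => lintegral_mono (hanti h)
end

section
/- Let p ≥ 1 be a real number and n ≥ 1 a natural number. Define a sequence of real numbers (σ_m)_{m≥1} by σ_1 = ((p+1)/p)·(p+n−1) and the recurrence σ_{m+1} = ((p+m)/(p+m−1))·(σ_m − 1) for m ≥ 1. Then σ_m > p + n − m for every integer m with 1 ≤ m ≤ n; in particular σ_n > p. -/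
/-- The exponents `σ_m` arising in the iterated Hölder-inequality argument: if `p ≥ 1`,
`n ≥ 1`, `σ_1 = ((p+1)/p)(p+n-1)` and `σ_{m+1} = ((p+m)/(p+m-1))(σ_m - 1)` for `m ≥ 1`,
then `σ_m > p + n - m` for all `1 ≤ m ≤ n`; in particular `σ_n > p`. -/
theorem sigma_exponents_gt (p : ℝ) (hp : 1 ≤ p) (n : ℕ) (hn : 1 ≤ n)
    (σ : ℕ → ℝ)
    (h1 : σ 1 = ((p + 1) / p) * (p + (n : ℝ) - 1))
    (hrec : ∀ m : ℕ, 1 ≤ m → σ (m + 1) = ((p + (m : ℝ)) / (p + (m : ℝ) - 1)) * (σ m - 1)) :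
    (∀ m : ℕ, 1 ≤ m → m ≤ n → σ m > p + (n : ℝ) - (m : ℝ)) ∧ σ n > p := by
  have hp0 : 0 < p := lt_of_lt_of_le one_pos hp
  have hn1 : (1:ℝ) ≤ n := by exact_mod_cast hn
  have key : ∀ m : ℕ, 1 ≤ m → m ≤ n → σ m > p + (n : ℝ) - (m : ℝ) := by
    intro m
    induction m with
    | zero => intro h; omega
    | succ k ih =>
      intro _ hle
      rcases Nat.eq_zero_or_pos k with hk | hk
      · subst hk
        rw [h1]
        have hratio : 1 < (p + 1) / p := by
          rw [lt_div_iff₀ hp0]; linarith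
        have hpos : 0 < p + (n:ℝ) - 1 := by linarith
        push_cast
        nlinarith
      · have ihk := ih hk (by omega)
        rw [hrec k hk]
        have hm : (1:ℝ) ≤ (k:ℝ) := by exact_mod_cast hk
        have hkn : (k:ℝ) + 1 ≤ (n:ℝ) := by exact_mod_cast hle
        have hpos : 0 < p + (k:ℝ) - 1 := by linarith
        have hratio : 1 < (p + (k:ℝ)) / (p + (k:ℝ) - 1) := by
          rw [lt_div_iff₀ hpos]; linarith
        have h1' : 0 < σ k - 1 := by linarith
        have := mul_lt_mul_of_pos_right hratio h1'
        push_cast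
        nlinarith
  refine ⟨key, ?_⟩
  have := key n hn le_rfl
  linarith
end
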